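/- Let α₁, α₂ be real constants with α₂ ≠ 0 and let C : ℝ → ℝ be differentiable with C(t) ≠ 0 for t > 0. On the half-space {(t,x,y,z) ∈ ℝ⁴ : t > 0}, define the Bianchi I metric g = diag(−C(t)², C(t)²t^{2(α₂−1)/α₂}, C(t)²t^{2(α₂−α₁)/α₂}, C(t)²). Then the vector field X₂ = (α₂t, x, α₁y, α₂z) is a conformal Killing vector of g with conformal factor ψ(t,x,y,z) = α₂·(1 + t·C′(t)/C(t)): for all μ,ν and all points p with t > 0, Σ_λ [ξ^λ(p)·∂_λ g_{μν}(p) + g_{λν}(p)·∂_μ ξ^λ(p) + g_{μλ}(p)·∂_ν ξ^λ(p)] = 2ψ(p)·g_{μν}(p). -/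
import Mathlib


noncomputable section

/-- Partial derivative of `f` in the `μ`-th coordinate direction at `p`. -/
def pd (μ : Fin 4) (f : (Fin 4 → ℝ) → ℝ) (p : Fin 4 → ℝ) : ℝ :=
  fderiv ℝ f p (Pi.single μ 1)

/-- `ξ` is a conformal Killing vector of the metric `g` with conformal factor `ψ`
on the domain `D`. -/
def IsCKVOn (D : (Fin 4 → ℝ) → Prop)
    (g : (Fin 4 → ℝ) → Matrix (Fin 4) (Fin 4) ℝ)
    (ξ : (Fin 4 → ℝ) → Fin 4 → ℝ) (ψ : (Fin 4 → ℝ) → ℝ) : Prop :=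
  ∀ (μ ν : Fin 4) (p : Fin 4 → ℝ), D p →
    (∑ l : Fin 4, (ξ p l * pd l (fun q => g q μ ν) p
      + g p l ν * pd μ (fun q => ξ q l) p
      + g p μ l * pd ν (fun q => ξ q l) p)) = 2 * ψ p * g p μ ν

/-- `ξ` is a Killing vector of the metric `g` on the domain `D`. -/
def IsKVOn (D : (Fin 4 → ℝ) → Prop)
    (g : (Fin 4 → ℝ) → Matrix (Fin 4) (Fin 4) ℝ)
    (ξ : (Fin 4 → ℝ) → Fin 4 → ℝ) : Prop :=
  ∀ (μ ν : Fin 4) (p : Fin 4 → ℝ), D p →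
    (∑ l : Fin 4, (ξ p l * pd l (fun q => g q μ ν) p
      + g p l ν * pd μ (fun q => ξ q l) p
      + g p μ l * pd ν (fun q => ξ q l) p)) = 0

lemma pd_proj (i μ : Fin 4) (p : Fin 4 → ℝ) :
    pd μ (fun q => q i) p = if μ = i then 1 else 0 := by
  have h : HasFDerivAt (fun q : Fin 4 → ℝ => q i)
      (ContinuousLinearMap.proj (R := ℝ) (φ := fun _ : Fin 4 => ℝ) i) p :=
    (ContinuousLinearMap.proj (R := ℝ) (φ := fun _ : Fin 4 => ℝ) i).hasFDerivAt
  unfold pd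
  rw [h.fderiv]
  simp [Pi.single_apply, eq_comm]

lemma pd_lin (c : ℝ) (i μ : Fin 4) (p : Fin 4 → ℝ) :
    pd μ (fun q => c * q i) p = if μ = i then c else 0 := by
  have h : HasFDerivAt (fun q : Fin 4 → ℝ => c * q i)
      (c • ContinuousLinearMap.proj (R := ℝ) (φ := fun _ : Fin 4 => ℝ) i) p :=
    ((ContinuousLinearMap.proj (R := ℝ) (φ := fun _ : Fin 4 => ℝ) i).hasFDerivAt (x := p)).const_mul c
  unfold pd
  rw [h.fderiv]
  simp [Pi.single_apply, eq_comm]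

lemma pd_comp0 {F : ℝ → ℝ} {f' : ℝ} {p : Fin 4 → ℝ} (hF : HasDerivAt F f' (p 0)) (l : Fin 4) :
    pd l (fun q => F (q 0)) p = if l = 0 then f' else 0 := by
  have hproj : HasFDerivAt (fun q : Fin 4 → ℝ => q 0)
      (ContinuousLinearMap.proj (R := ℝ) (φ := fun _ : Fin 4 => ℝ) 0) p :=
    (ContinuousLinearMap.proj (R := ℝ) (φ := fun _ : Fin 4 => ℝ) 0).hasFDerivAt
  have h : HasFDerivAt (fun q : Fin 4 → ℝ => F (q 0))
      ((ContinuousLinearMap.smulRight (1 : ℝ →L[ℝ] ℝ) f').comp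
        (ContinuousLinearMap.proj (R := ℝ) (φ := fun _ : Fin 4 => ℝ) 0)) p :=
    (hF.hasFDerivAt).comp p hproj
  unfold pd
  rw [h.fderiv]
  simp [Pi.single_apply, eq_comm]

lemma pd_const (c : ℝ) (μ : Fin 4) (p : Fin 4 → ℝ) :
    pd μ (fun _ => c) p = 0 := by
  simp [pd]

/-- on the half-space `t > 0`, the vector field
`X₂ = α₂ t∂_t + x∂_x + α₁ y∂_y + α₂ z∂_z` is a conformal Killing vector of the Bianchi I
metric `diag(−C², C² t^{2(α₂−1)/α₂}, C² t^{2(α₂−α₁)/α₂}, C²)` with conformal factor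
`ψ = α₂ (1 + t C′(t)/C(t))`. -/
theorem bianchiI_X2_is_CKV (α₁ α₂ : ℝ) (hα₂ : α₂ ≠ 0)
    (C : ℝ → ℝ) (hC : Differentiable ℝ C) (hC0 : ∀ t, 0 < t → C t ≠ 0)
    (g : (Fin 4 → ℝ) → Matrix (Fin 4) (Fin 4) ℝ)
    (hg : g = fun p => Matrix.diagonal
      ![-(C (p 0)) ^ 2,
        (C (p 0)) ^ 2 * Real.rpow (p 0) (2 * (α₂ - 1) / α₂),
        (C (p 0)) ^ 2 * Real.rpow (p 0) (2 * (α₂ - α₁) / α₂),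
        (C (p 0)) ^ 2])
    (ξ : (Fin 4 → ℝ) → Fin 4 → ℝ)
    (hξ : ξ = fun p => ![α₂ * p 0, p 1, α₁ * p 2, α₂ * p 3])
    (ψ : (Fin 4 → ℝ) → ℝ)
    (hψ : ψ = fun p => α₂ * (1 + p 0 * deriv C (p 0) / C (p 0))) :
    IsCKVOn (fun p => 0 < p 0) g ξ ψ := by
  subst hg hξ hψ
  intro μ ν p hp
  have ht : p 0 ≠ 0 := hp.ne'
  have hCp : C (p 0) ≠ 0 := hC0 _ hp
  have hC2 : HasDerivAt (fun t => C t ^ 2) (2 * C (p 0) * deriv C (p 0)) (p 0) := by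
    have := ((hC (p 0)).hasDerivAt).pow 2
    norm_num at this
    exact this
  have hneg : HasDerivAt (fun t => -(C t ^ 2)) (-(2 * C (p 0) * deriv C (p 0))) (p 0) := hC2.neg
  have hmul : ∀ b : ℝ, HasDerivAt (fun t => C t ^ 2 * t ^ b)
      (2 * C (p 0) * deriv C (p 0) * p 0 ^ b
        + C (p 0) ^ 2 * (b * p 0 ^ (b - 1))) (p 0) := by
    intro b
    exact hC2.mul (Real.hasDerivAt_rpow_const (Or.inl ht))
  have pdg0 := fun l => pd_comp0 hneg l
  have pdg3 := fun l => pd_comp0 hC2 l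
  have pdgb := fun (b : ℝ) l => pd_comp0 (hmul b) l
  fin_cases μ <;> fin_cases ν <;>
    simp only [Fin.isValue, Matrix.diagonal, Matrix.of_apply, Matrix.cons_val', Matrix.cons_val_zero,
      Matrix.cons_val_one, Matrix.head_cons, Matrix.cons_val_two, Matrix.tail_cons,
      Matrix.cons_val_three, Matrix.head_fin_const, Fin.sum_univ_four, Fin.reduceEq, if_true,
      if_false, reduceIte] <;>
    simp [pdg0, pdg3, pdgb, pd_lin, pd_proj, pd_const, Real.rpow_sub_one ht] <;>
    field_simp <;>
    ring
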